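/- For every byte string S, the sequence of merge applications performed by encode on S is, at every step, the lexicographically least merge application applicable to the current token sequence. Consequently, if a finite sequence of merge applications starting from the base tokenization of S has the property that each applied application is lexicographically least among those applicable to the current token sequence, and no merge application is applicable to the final token sequence, then this sequence of applications equals the sequence performed by encode on S, and its final token sequence equals encode(S). -/

import Mathlib

/-!
Formalization of a BPE tokenizer with an ordered merge list.

* `σ` is the (finite) byte alphabet, `τ` is the (finite) vocabulary of tokens.
* `base` embeds each byte as a distinct base token.
* `dec` decodes a single token to a byte string; it is extended to token
  sequences by concatenation (`decodeSeq`).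
* `merges` is the ordered merge list; each merge `(l, r, n)` replaces an
  adjacent pair `(l, r)` by the single token `n`, and satisfies
  `dec n = dec l ++ dec r`.
* `encode` turns a byte string into its base tokens and then, processing the
  merges in order, repeatedly replaces the leftmost adjacent occurrence of
  `(l, r)` by `n` until no occurrence remains, before moving to the next merge.
-/

structure BPE (σ τ : Type*) where
  base : σ → τ
  dec : τ → List σ
  merges : List (τ × τ × τ)
  base_inj : Function.Injective base
  dec_base : ∀ b, dec (base b) = [b]
  dec_merge : ∀ m ∈ merges, dec m.2.2 = dec m.1 ++ dec m.2.1

namespace BPE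

variable {σ τ : Type*} [DecidableEq τ]

/-- Decode a token sequence by concatenating the decodings of its tokens. -/
def decodeSeq (B : BPE σ τ) (T : List τ) : List σ := (T.map B.dec).flatten

/-- Replace the leftmost adjacent occurrence of `(l, r)` by `n`, if any,
also returning the starting byte position of the replaced pair. -/
def replaceLeftmost (B : BPE σ τ) (l r n : τ) : List τ → Option (ℕ × List τ)
  | [] => none
  | [_] => none
  | t :: u :: rest =>
      if t = l ∧ u = r then some (0, n :: rest)
      else (B.replaceLeftmost l r n (u :: rest)).map
        (fun p => (p.1 + (B.dec t).length, t :: p.2))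

/-- Repeatedly replace the leftmost adjacent occurrence of `(l, r)` by `n`
until no occurrence remains (the fuel, taken to be the length of the list,
suffices since every replacement shortens the list).  Also returns the list
of byte positions at which replacements were performed, in order. -/
def runMerge (B : BPE σ τ) (l r n : τ) : ℕ → List τ → List τ × List ℕ
  | 0, T => (T, [])
  | fuel + 1, T =>
    match B.replaceLeftmost l r n T with
    | none => (T, [])
    | some (p, T') =>
      let q := B.runMerge l r n fuel T'
      (q.1, p :: q.2)

/-- Process an (indexed) list of merges in order, starting from token sequence
`T`; returns the final token sequence together with the ordered list of merge
applications performed, each recorded as a pair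
(index of the merge in the merge list, starting byte position). -/
def encodeRunAux (B : BPE σ τ) : List (ℕ × τ × τ × τ) → List τ → List τ × List (ℕ × ℕ)
  | [], T => (T, [])
  | (i, l, r, n) :: ms, T =>
    let q := B.runMerge l r n T.length T
    let q' := B.encodeRunAux ms q.1
    (q'.1, q.2.map (fun p => (i, p)) ++ q'.2)

/-- The full run of the BPE encoder on a byte string `S`: the final token
sequence together with the ordered list of merge applications performed. -/
def encodeRun (B : BPE σ τ) (S : List σ) : List τ × List (ℕ × ℕ) :=
  B.encodeRunAux (B.merges.zipIdx.map Prod.swap) (S.map B.base)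

/-- BPE encoding of a byte string. -/
def encode (B : BPE σ τ) (S : List σ) : List τ := (B.encodeRun S).1

/-- The ordered list of merge applications (merge index, starting byte
position) performed during the run of `encode` on `S`. -/
def encodeApps (B : BPE σ τ) (S : List σ) : List (ℕ × ℕ) := (B.encodeRun S).2

/-- A token sequence is *valid* if it is the canonical encoding of the byte
string it decodes to. -/
def Valid (B : BPE σ τ) (T : List τ) : Prop := B.encode (B.decodeSeq T) = T

/-- The merge list is in *normal form*:
(i) each token is produced by at most one merge;
(ii) every token `t` satisfies `encode (dec t) = [t]`;
(iii) every merge occurs later in the merge list than the merges producing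
each of its two input tokens. -/
def NormalForm (B : BPE σ τ) : Prop :=
  (∀ i j (hi : i < B.merges.length) (hj : j < B.merges.length),
      (B.merges[i]'hi).2.2 = (B.merges[j]'hj).2.2 → i = j) ∧
  (∀ t : τ, B.encode (B.dec t) = [t]) ∧
  (∀ i j (hi : i < B.merges.length) (hj : j < B.merges.length),
      (B.merges[i]'hi).2.2 = (B.merges[j]'hj).1 ∨
        (B.merges[i]'hi).2.2 = (B.merges[j]'hj).2.1 → i < j)

/-- The merge application `app = (t, p)` *crosses* byte position `c` if the
token it creates (the output of merge `t`, starting at byte position `p`)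
has a byte span properly containing `c`. -/
def AppCrosses (B : BPE σ τ) (app : ℕ × ℕ) (c : ℕ) : Prop :=
  ∃ h : app.1 < B.merges.length,
    app.2 < c ∧ c < app.2 + (B.dec (B.merges[app.1]'h).2.2).length

/-- Some merge applied during the run of `encode` on `S` crosses position `c`. -/
def MergeCrossesInRun (B : BPE σ τ) (S : List σ) (c : ℕ) : Prop :=
  ∃ app ∈ B.encodeApps S, B.AppCrosses app c

/-- The token sequence `U` contains a token whose byte span properly
contains position `c`. -/
def TokenCrosses (B : BPE σ τ) (U : List τ) (c : ℕ) : Prop :=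
  ∃ k, k < U.length ∧
    (B.decodeSeq (U.take k)).length < c ∧ c < (B.decodeSeq (U.take (k + 1))).length

end BPE
namespace BPE

variable {σ τ : Type*} [DecidableEq τ]

/-- The *Valid Covering Tree* of a byte string `P`: the set of all nonempty
token sequences `T = [t₁, …, tₙ]` such that (1) `P` is a prefix of
`decode T`, (2) `decode [t₁, …, t_{n-1}]` is a prefix of `P`, and
(3) `T` is valid. -/
def VCT (B : BPE σ τ) (P : List σ) : Set (List τ) :=
  {T | T ≠ [] ∧ P <+: B.decodeSeq T ∧ B.decodeSeq T.dropLast <+: P ∧ B.Valid T}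

/-- The maximal prefix of a token sequence whose total decoded length is at
most `k`, i.e. the tokens whose byte spans end at or before position `k`
(together with their spans, which are determined by the preceding tokens). -/
def spanPrefix (B : BPE σ τ) (k : ℕ) : List τ → List τ
  | [] => []
  | t :: T =>
      if (B.dec t).length ≤ k then t :: B.spanPrefix (k - (B.dec t).length) T
      else []

/-- `L₀` is a *lookahead bound* for the tokenizer if whenever two byte strings
agree on their first `k + L₀` bytes, the tokens of their encodings whose byte
spans end at or before position `k` coincide (with identical spans). -/
def LookaheadBound (B : BPE σ τ) (L₀ : ℕ) : Prop :=
  ∀ (x x' : List σ) (k : ℕ), x.take (k + L₀) = x'.take (k + L₀) →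
    B.spanPrefix k (B.encode x) = B.spanPrefix k (B.encode x')

/-- `U'` is the minimal covering prefix of `U` with respect to `P`: the
shortest prefix of `U` whose decoding has `P` as a prefix. -/
def IsMinCover (B : BPE σ τ) (P : List σ) (U U' : List τ) : Prop :=
  U' <+: U ∧ P <+: B.decodeSeq U' ∧
    ∀ U'' : List τ, U'' <+: U → P <+: B.decodeSeq U'' → U'.length ≤ U''.length

/-- The pair `(l, r)` occurs adjacently in `T`. -/
def PairAdj (l r : τ) (T : List τ) : Prop := ∃ A C, T = A ++ l :: r :: C

/-- The merge application `a = (t, i)` (merge index `t`, starting byte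
position `i` of the left token) is applicable to the token sequence `T`. -/
def Applicable (B : BPE σ τ) (a : ℕ × ℕ) (T : List τ) : Prop :=
  ∃ h : a.1 < B.merges.length, ∃ A C : List τ,
    T = A ++ (B.merges[a.1]'h).1 :: (B.merges[a.1]'h).2.1 :: C ∧
      (B.decodeSeq A).length = a.2

/-- `T'` is obtained from `T` by performing the merge application `a = (t, i)`:
the input pair of merge `t`, occurring adjacently in `T` with the left token
starting at byte position `i`, is replaced by the output token of merge `t`. -/
def ApplyApp (B : BPE σ τ) (a : ℕ × ℕ) (T T' : List τ) : Prop :=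
  ∃ h : a.1 < B.merges.length, ∃ A C : List τ,
    T = A ++ (B.merges[a.1]'h).1 :: (B.merges[a.1]'h).2.1 :: C ∧
      (B.decodeSeq A).length = a.2 ∧
      T' = A ++ (B.merges[a.1]'h).2.2 :: C

/-- Lexicographic order on merge applications `(t, i)`. -/
def appLE (a a' : ℕ × ℕ) : Prop :=
  a.1 < a'.1 ∨ (a.1 = a'.1 ∧ a.2 ≤ a'.2)

/-- `GreedyChain B T₀ apps T` holds when the sequence of merge applications
`apps` leads from token sequence `T₀` to token sequence `T`, and each applied
application is lexicographically least among those applicable to the current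
token sequence. -/
inductive GreedyChain (B : BPE σ τ) : List τ → List (ℕ × ℕ) → List τ → Prop
  | nil (T : List τ) : GreedyChain B T [] T
  | cons {T T' Tf : List τ} {a : ℕ × ℕ} {apps : List (ℕ × ℕ)} :
      B.ApplyApp a T T' →
      (∀ a', B.Applicable a' T → appLE a a') →
      GreedyChain B T' apps Tf →
      GreedyChain B T (a :: apps) Tf

end BPE

/-!
While processing merge `i`, the encoder maintains the invariant that no adjacent pair of
tokens is the input of a merge of smaller index: a replacement by the output of merge `i`
cannot create such a pair, since by normal form (iii) that output is an input only of later
merges. So every leftmost replacement the encoder performs is the lexicographically least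
applicable merge application, and at the end no merge is applicable. Conversely, greedy
chains are deterministic: the least applicable application is unique, and so is its effect,
because all tokens decode to nonempty strings and a byte position therefore pins down the
occurrence of the pair.
-/

namespace BPE

variable {σ τ : Type*}

section Decode

variable (B : BPE σ τ)

@[simp] lemma decodeSeq_cons (t : τ) (T : List τ) :
    B.decodeSeq (t :: T) = B.dec t ++ B.decodeSeq T := by simp [decodeSeq]

@[simp] lemma decodeSeq_append (T U : List τ) :
    B.decodeSeq (T ++ U) = B.decodeSeq T ++ B.decodeSeq U := by simp [decodeSeq]

variable {B}

lemma length_decodeSeq_le_of_prefix {A A' : List τ} (h : A <+: A') :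
    (B.decodeSeq A).length ≤ (B.decodeSeq A').length := by
  obtain ⟨D, rfl⟩ := h
  simp

lemma prefix_eq_of_length_decodeSeq_eq {T A₁ A₂ : List τ} (hne : ∀ t ∈ T, B.dec t ≠ [])
    (h₁ : A₁ <+: T) (h₂ : A₂ <+: T)
    (hlen : (B.decodeSeq A₁).length = (B.decodeSeq A₂).length) : A₁ = A₂ := by
  wlog h : A₁ <+: A₂ generalizing A₁ A₂
  · exact (this h₂ h₁ hlen.symm ((List.prefix_or_prefix_of_prefix h₁ h₂).resolve_left h)).symm
  obtain ⟨D, rfl⟩ := h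
  cases D with
  | nil => simp
  | cons d D =>
    have hd : d ∈ T := h₂.subset (by simp)
    simp at hlen
    exact absurd hlen.1 (hne d hd)

end Decode

section PairAdj

lemma pairAdj_cons_iff {l r t : τ} {T : List τ} :
    PairAdj l r (t :: T) ↔ t = l ∧ T.head? = some r ∨ PairAdj l r T := by
  constructor
  · rintro ⟨_ | ⟨a, A⟩, C, h⟩
    · simp_all
    · simp only [List.cons_append, List.cons.injEq] at h
      exact Or.inr ⟨A, C, h.2⟩
  · rintro (⟨rfl, h⟩ | ⟨A, C, rfl⟩)
    · obtain ⟨C, rfl⟩ : ∃ C, T = r :: C := by cases T <;> simp_all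
      exact ⟨[], C, rfl⟩
    · exact ⟨t :: A, C, rfl⟩

lemma not_pairAdj_nil (l r : τ) : ¬ PairAdj l r [] := by
  rintro ⟨A, C, h⟩
  simp at h

lemma not_pairAdj_replace {l r n l' r' : τ} (hl : n ≠ l') (hr : n ≠ r') {C : List τ} :
    ∀ A : List τ, ¬ PairAdj l' r' (A ++ l :: r :: C) → ¬ PairAdj l' r' (A ++ n :: C)
  | [], h, hadj => by
    rcases pairAdj_cons_iff.1 hadj with ⟨rfl, _⟩ | hC
    · exact hl rfl
    · exact h (pairAdj_cons_iff.2 (Or.inr (pairAdj_cons_iff.2 (Or.inr hC))))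
  | a :: A, h, hadj => by
    rcases pairAdj_cons_iff.1 hadj with ⟨rfl, hhead⟩ | hA
    · cases A <;> simp_all [pairAdj_cons_iff]
    · exact not_pairAdj_replace hl hr A (fun h' => h (pairAdj_cons_iff.2 (Or.inr h'))) hA

end PairAdj

section ReplaceLeftmost

variable [DecidableEq τ] {B : BPE σ τ} {l r n : τ}

lemma not_pairAdj_of_replaceLeftmost_eq_none {T : List τ}
    (h : B.replaceLeftmost l r n T = none) : ¬ PairAdj l r T := by
  fun_induction B.replaceLeftmost l r n T with
  | case1 => exact not_pairAdj_nil l r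
  | case2 => simp [pairAdj_cons_iff, not_pairAdj_nil]
  | case3 => simp at h
  | case4 t u rest hne ih =>
    simp only [Option.map_eq_none_iff] at h
    simp_all [pairAdj_cons_iff]

lemma exists_of_replaceLeftmost_eq_some {T T' : List τ} {p : ℕ}
    (h : B.replaceLeftmost l r n T = some (p, T')) :
    ∃ A C, T = A ++ l :: r :: C ∧ T' = A ++ n :: C ∧ (B.decodeSeq A).length = p ∧
      ∀ A' C', T = A' ++ l :: r :: C' → A <+: A' := by
  fun_induction B.replaceLeftmost l r n T generalizing p T' with
  | case1 | case2 => simp at h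
  | case3 t u rest hmatch =>
    obtain ⟨rfl, rfl⟩ := hmatch
    obtain ⟨rfl, rfl⟩ : 0 = p ∧ n :: rest = T' := by simpa using h
    exact ⟨[], rest, rfl, rfl, rfl, fun A' _ _ => List.nil_prefix⟩
  | case4 t u rest hmatch ih =>
    obtain ⟨⟨p₀, T₀⟩, hrec, hpT⟩ := Option.map_eq_some_iff.1 h
    obtain ⟨rfl, rfl⟩ : p₀ + (B.dec t).length = p ∧ t :: T₀ = T' := by simpa using hpT
    obtain ⟨A, C, hT, hT', hp, hleft⟩ := ih hrec
    refine ⟨t :: A, C, by simp [hT], by simp [hT'], by simp [hp, add_comm], ?_⟩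
    rintro (_ | ⟨a, A'⟩) C' hT''
    · simp_all
    · simp only [List.cons_append, List.cons.injEq] at hT''
      exact hT''.1 ▸ (List.prefix_cons_inj t).2 (hleft A' C' hT''.2)

end ReplaceLeftmost

section Greedy

variable {B : BPE σ τ}

def PairFreeBelow (B : BPE σ τ) (k : ℕ) (T : List τ) : Prop :=
  ∀ j (hj : j < B.merges.length), j < k → ¬ PairAdj (B.merges[j]).1 (B.merges[j]).2.1 T

lemma PairFreeBelow.succ {i : ℕ} {T : List τ} (hfree : B.PairFreeBelow i T)
    (hi : i < B.merges.length) (hT : ¬ PairAdj (B.merges[i]).1 (B.merges[i]).2.1 T) :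
    B.PairFreeBelow (i + 1) T := by
  intro j hj hji
  rcases Nat.lt_succ_iff_lt_or_eq.1 hji with hji | rfl
  · exact hfree j hj hji
  · exact hT

lemma not_applicable_of_pairFreeBelow_length {T : List τ}
    (hfree : B.PairFreeBelow B.merges.length T) (a : ℕ × ℕ) : ¬ B.Applicable a T :=
  fun ⟨hj, A, C, hT, _⟩ => hfree a.1 hj hj ⟨A, C, hT⟩

lemma appLE_of_leftmost {i : ℕ} {T A : List τ} (hfree : B.PairFreeBelow i T)
    (hi : i < B.merges.length) {l r n : τ} (hm : B.merges[i] = (l, r, n))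
    (hleft : ∀ A' C', T = A' ++ l :: r :: C' → A <+: A') (a : ℕ × ℕ)
    (ha : B.Applicable a T) : appLE (i, (B.decodeSeq A).length) a := by
  obtain ⟨j, q⟩ := a
  obtain ⟨hj, A', C', hT, rfl⟩ := ha
  rcases lt_trichotomy i j with hij | rfl | hji
  · exact Or.inl hij
  · exact Or.inr ⟨rfl, length_decodeSeq_le_of_prefix (hleft A' C' (by simpa [hm] using hT))⟩
  · exact absurd ⟨A', C', hT⟩ (hfree j hj hji)

lemma GreedyChain.append {T T' T'' : List τ} {as bs : List (ℕ × ℕ)}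
    (h₁ : B.GreedyChain T as T') (h₂ : B.GreedyChain T' bs T'') :
    B.GreedyChain T (as ++ bs) T'' := by
  induction h₁ with
  | nil => exact h₂
  | cons ha hmin _ ih => exact .cons ha hmin (ih h₂)

variable [DecidableEq τ]

/-- By normal form (iii), the output of merge `i` is an input only of later merges. -/
lemma PairFreeBelow.replace (hNF : B.NormalForm) {i : ℕ} (hi : i < B.merges.length)
    {l r n : τ} (hm : B.merges[i] = (l, r, n)) {A C : List τ}
    (hfree : B.PairFreeBelow i (A ++ l :: r :: C)) : B.PairFreeBelow i (A ++ n :: C) := by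
  intro j hj hji
  have hlater := hNF.2.2 i j hi hj
  rw [hm] at hlater
  exact not_pairAdj_replace (fun h => by have := hlater (Or.inl h); omega)
    (fun h => by have := hlater (Or.inr h); omega) A (hfree j hj hji)

lemma greedyChain_runMerge (hNF : B.NormalForm) {i : ℕ} (hi : i < B.merges.length)
    {l r n : τ} (hm : B.merges[i] = (l, r, n)) (fuel : ℕ) (T : List τ)
    (hlen : T.length ≤ fuel) (hfree : B.PairFreeBelow i T) :
    B.GreedyChain T ((B.runMerge l r n fuel T).2.map (i, ·)) (B.runMerge l r n fuel T).1 ∧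
      B.PairFreeBelow (i + 1) (B.runMerge l r n fuel T).1 := by
  induction fuel generalizing T with
  | zero =>
    obtain rfl : T = [] := List.eq_nil_of_length_eq_zero (Nat.le_zero.1 hlen)
    exact ⟨.nil [], fun j hj _ => not_pairAdj_nil _ _⟩
  | succ fuel ih =>
    rw [runMerge]
    cases hrep : B.replaceLeftmost l r n T with
    | none =>
      exact ⟨.nil T, hfree.succ hi (hm ▸ not_pairAdj_of_replaceLeftmost_eq_none hrep)⟩
    | some q =>
      obtain ⟨p, T'⟩ := q
      obtain ⟨A, C, rfl, rfl, rfl, hleft⟩ := exists_of_replaceLeftmost_eq_some hrep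
      obtain ⟨hchain, hfree'⟩ :=
        ih (A ++ n :: C) (by simp at hlen ⊢; omega) (hfree.replace hNF hi hm)
      exact ⟨.cons ⟨hi, A, C, by rw [hm], rfl, by rw [hm]⟩
        (appLE_of_leftmost hfree hi hm hleft) hchain, hfree'⟩

lemma greedyChain_encodeRunAux (hNF : B.NormalForm) (i : ℕ) (T : List τ)
    (hfree : B.PairFreeBelow i T) :
    B.GreedyChain T (B.encodeRunAux ((B.merges.zipIdx.map Prod.swap).drop i) T).2
        (B.encodeRunAux ((B.merges.zipIdx.map Prod.swap).drop i) T).1 ∧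
      B.PairFreeBelow B.merges.length
        (B.encodeRunAux ((B.merges.zipIdx.map Prod.swap).drop i) T).1 := by
  by_cases hi : i < B.merges.length
  · rw [List.drop_eq_getElem_cons (by simpa using hi)]
    simp only [List.getElem_map, List.getElem_zipIdx, Prod.swap_prod_mk, zero_add]
    generalize hm : B.merges[i] = m
    obtain ⟨l, r, n⟩ := m
    rw [encodeRunAux]
    obtain ⟨hchain, hfree'⟩ := greedyChain_runMerge hNF hi hm T.length T le_rfl hfree
    obtain ⟨hchain', hfree''⟩ := greedyChain_encodeRunAux hNF (i + 1) _ hfree'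
    exact ⟨hchain.append hchain', hfree''⟩
  · rw [List.drop_eq_nil_of_le (by simpa using hi)]
    exact ⟨.nil T, fun j hj _ => hfree j hj (by omega)⟩
termination_by B.merges.length - i

theorem greedyChain_encode (hNF : B.NormalForm) (S : List σ) :
    B.GreedyChain (S.map B.base) (B.encodeApps S) (B.encode S) ∧
      ∀ a, ¬ B.Applicable a (B.encode S) := by
  obtain ⟨hchain, hfree⟩ :=
    greedyChain_encodeRunAux hNF 0 (S.map B.base) fun j _ h => absurd h (Nat.not_lt_zero j)
  exact ⟨hchain, not_applicable_of_pairFreeBelow_length hfree⟩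

end Greedy

section Uniqueness

variable {B : BPE σ τ}

lemma appLE_antisymm {a b : ℕ × ℕ} (hab : appLE a b) (hba : appLE b a) : a = b :=
  toLex.injective (le_antisymm (Prod.Lex.toLex_le_toLex.2 hab) (Prod.Lex.toLex_le_toLex.2 hba))

lemma ApplyApp.applicable {a : ℕ × ℕ} {T T' : List τ} (h : B.ApplyApp a T T') :
    B.Applicable a T :=
  let ⟨hj, A, C, hT, hp, _⟩ := h
  ⟨hj, A, C, hT, hp⟩

lemma ApplyApp.right_unique {a : ℕ × ℕ} {T T₁ T₂ : List τ} (hne : ∀ t ∈ T, B.dec t ≠ [])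
    (h₁ : B.ApplyApp a T T₁) (h₂ : B.ApplyApp a T T₂) : T₁ = T₂ := by
  obtain ⟨hj, A₁, C₁, hT₁, hp₁, rfl⟩ := h₁
  obtain ⟨_, A₂, C₂, hT₂, hp₂, rfl⟩ := h₂
  obtain rfl : A₁ = A₂ := prefix_eq_of_length_decodeSeq_eq hne (hT₁ ▸ List.prefix_append _ _)
    (hT₂ ▸ List.prefix_append _ _) (hp₁.trans hp₂.symm)
  simp_all

lemma ApplyApp.dec_ne_nil {a : ℕ × ℕ} {T T' : List τ} (hne : ∀ t ∈ T, B.dec t ≠ [])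
    (h : B.ApplyApp a T T') : ∀ t ∈ T', B.dec t ≠ [] := by
  obtain ⟨hj, A, C, rfl, -, rfl⟩ := h
  have hdec := B.dec_merge _ (List.getElem_mem hj)
  simp only [List.mem_append, List.mem_cons] at hne ⊢
  rintro t (htA | rfl | htC)
  · exact hne t (Or.inl htA)
  · simp [hdec, hne _ (Or.inr (Or.inl rfl))]
  · exact hne t (Or.inr (Or.inr (Or.inr htC)))

theorem GreedyChain.eq_of_terminal {T Tf₁ Tf₂ : List τ} {apps₁ apps₂ : List (ℕ × ℕ)}
    (hne : ∀ t ∈ T, B.dec t ≠ []) (h₁ : B.GreedyChain T apps₁ Tf₁)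
    (h₂ : B.GreedyChain T apps₂ Tf₂) (ht₁ : ∀ a, ¬ B.Applicable a Tf₁)
    (ht₂ : ∀ a, ¬ B.Applicable a Tf₂) : apps₁ = apps₂ ∧ Tf₁ = Tf₂ := by
  induction h₁ generalizing apps₂ with
  | nil =>
    cases h₂ with
    | nil => exact ⟨rfl, rfl⟩
    | cons hb _ _ => exact absurd hb.applicable (ht₁ _)
  | cons ha hmin _ ih =>
    cases h₂ with
    | nil => exact absurd ha.applicable (ht₂ _)
    | cons hb hmin' hchain =>
      obtain rfl := appLE_antisymm (hmin _ hb.applicable) (hmin' _ ha.applicable)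
      obtain rfl := ha.right_unique hne hb
      obtain ⟨rfl, rfl⟩ := ih (ha.dec_ne_nil hne) hchain ht₁
      exact ⟨rfl, rfl⟩

end Uniqueness

end BPE

/-- For every byte string `S`, the sequence of merge applications performed by
`encode` on `S` is, at every step, the lexicographically least merge
application applicable to the current token sequence (and no merge application
is applicable to the final token sequence `encode S`).  Consequently, if a
finite sequence of merge applications starting from the base tokenization of
`S` has the property that each applied application is lexicographically least
among those applicable to the current token sequence, and no merge application
is applicable to the final token sequence, then this sequence of applications
equals the sequence performed by `encode` on `S`, and its final token sequence
equals `encode S`. -/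
theorem BPE.encode_run_greedy_least {σ τ : Type*} [DecidableEq τ]
    (B : BPE σ τ) (hNF : B.NormalForm) (S : List σ) :
    (B.GreedyChain (S.map B.base) (B.encodeApps S) (B.encode S) ∧
        ∀ a, ¬ B.Applicable a (B.encode S)) ∧
      (∀ (apps : List (ℕ × ℕ)) (Tf : List τ),
        B.GreedyChain (S.map B.base) apps Tf →
        (∀ a, ¬ B.Applicable a Tf) →
        apps = B.encodeApps S ∧ Tf = B.encode S) := by
  obtain ⟨hrun, hterm⟩ := B.greedyChain_encode hNF S
  refine ⟨⟨hrun, hterm⟩, fun apps Tf hchain hTf => ?_⟩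
  have hne : ∀ t ∈ S.map B.base, B.dec t ≠ [] := by simp [B.dec_base]
  exact hchain.eq_of_terminal hne hrun hTf hterm
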